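/- arXiv:1505.06412 — 13 statements merged into one kernel-verified Lean document; each statement's English description precedes it below -/
import Mathlib

section
/- A proper ideal Q of R is uniformly primary if and only if there exists a positive integer n such that for all a ∈ R, either a^n ∈ Q or (Q : a) = Q. -/
theorem stmt_4 {R : Type*} [CommRing R] (Q : Ideal R) (hQ : Q ≠ ⊤) :
    (∃ n : ℕ, 0 < n ∧ ∀ r s : R, r * s ∈ Q → r ∉ Q → s ^ n ∈ Q) ↔
    (∃ n : ℕ, 0 < n ∧ ∀ a : R,
      a ^ n ∈ Q ∨ Q.colon (Ideal.span {a}) = Q) := by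
  constructor
  · rintro ⟨n, hn, h⟩
    refine ⟨n, hn, fun a => ?_⟩
    by_cases ha : a ^ n ∈ Q
    · exact Or.inl ha
    · refine Or.inr (le_antisymm (fun r hr => ?_) (fun r hr => ?_))
      · rw [Ideal.mem_colon_span_singleton] at hr
        by_contra hrQ
        exact ha (h r a hr hrQ)
      · rw [Ideal.mem_colon_span_singleton]
        exact Q.mul_mem_right a hr
  · rintro ⟨n, hn, h⟩
    refine ⟨n, hn, fun r s hrs hr => ?_⟩
    rcases h s with hs | hs
    · exact hs
    · exact absurd (hs ▸ Ideal.mem_colon_span_singleton.mpr hrs) hr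
end

section
/- A proper ideal Q of R is uniformly 2-absorbing primary if and only if there exists a positive integer n such that for every a,b ∈ R and every ideal I of R, abI ⊆ Q implies aI ⊆ Q or bI ⊆ √Q or (ab)^n ∈ Q. -/
theorem stmt_5 {R : Type*} [CommRing R] (Q : Ideal R) (hQ : Q ≠ ⊤) :
    (∃ n : ℕ, 0 < n ∧ ∀ a b c : R, a * b * c ∈ Q → a * b ∉ Q →
      a * c ∉ Q.radical → (b * c) ^ n ∈ Q) ↔
    (∃ n : ℕ, 0 < n ∧ ∀ (a b : R) (I : Ideal R),
      (∀ x ∈ I, a * b * x ∈ Q) →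
        (∀ x ∈ I, a * x ∈ Q) ∨ (∀ x ∈ I, b * x ∈ Q.radical) ∨
          (a * b) ^ n ∈ Q) := by
  constructor
  · rintro ⟨n, hn, h⟩
    refine ⟨n, hn, fun a b I hI => ?_⟩
    by_cases ha : ∀ x ∈ I, a * x ∈ Q
    · exact Or.inl ha
    by_cases hb : ∀ x ∈ I, b * x ∈ Q.radical
    · exact Or.inr (Or.inl hb)
    push_neg at ha hb
    obtain ⟨x, hxI, hax⟩ := ha
    obtain ⟨y, hyI, hby⟩ := hb
    right; right
    obtain ⟨u, huI, hau, hbu⟩ : ∃ u ∈ I, a * u ∉ Q ∧ b * u ∉ Q.radical := by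
      by_cases hay : a * y ∈ Q
      · by_cases hbx : b * x ∈ Q.radical
        · refine ⟨x + y, I.add_mem hxI hyI, ?_, ?_⟩
          · intro hc; rw [mul_add] at hc
            exact hax (by simpa using Q.sub_mem hc hay)
          · intro hc; rw [mul_add] at hc
            exact hby (by simpa using Q.radical.sub_mem hc hbx)
        · exact ⟨x, hxI, hax, hbx⟩
      · exact ⟨y, hyI, hay, hby⟩
    have h1 : u * a * b ∈ Q := by
      have := hI u huI; rw [show a * b * u = u * a * b by ring] at this; exact this
    exact h u a b h1 (by rwa [mul_comm] at hau) (by rwa [mul_comm] at hbu)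
  · rintro ⟨n, hn, h⟩
    refine ⟨n, hn, fun a b c habc hab hac => ?_⟩
    have hspan : ∀ x ∈ Ideal.span {a}, b * c * x ∈ Q := by
      intro x hx
      obtain ⟨r, rfl⟩ := Ideal.mem_span_singleton'.mp hx
      rw [show b * c * (r * a) = r * (a * b * c) by ring]
      exact Q.mul_mem_left r habc
    rcases h b c (Ideal.span {a}) hspan with h1 | h2 | h3
    · exact absurd (by rw [mul_comm]; exact h1 a (Ideal.mem_span_singleton_self a)) hab
    · exact absurd (by rw [mul_comm]; exact h2 a (Ideal.mem_span_singleton_self a)) hac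
    · exact h3
end

section
/- Let Q be a uniformly 2-absorbing primary ideal of R of order at most n and let x ∈ R \ Q be idempotent. Then (Q : x) is a uniformly 2-absorbing primary ideal of R of order at most n. -/
lemma idem_pow {R : Type*} [CommRing R] {x : R} (hidem : IsIdempotentElem x)
    {k : ℕ} (hk : 0 < k) : x ^ k = x := by
  induction k with
  | zero => omega
  | succ m ih =>
    rcases Nat.eq_zero_or_pos m with hm | hm
    · simp [hm]
    · rw [pow_succ, ih hm, hidem]

theorem stmt_7 {R : Type*} [CommRing R] (Q : Ideal R) (hQ : Q ≠ ⊤)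
    (n : ℕ) (hn : 0 < n)
    (h : ∀ a b c : R, a * b * c ∈ Q → a * b ∉ Q → a * c ∉ Q.radical →
      (b * c) ^ n ∈ Q)
    (x : R) (hx : x ∉ Q) (hidem : IsIdempotentElem x) :
    Q.colon (Ideal.span {x}) ≠ ⊤ ∧
    ∀ a b c : R, a * b * c ∈ Q.colon (Ideal.span {x}) →
      a * b ∉ Q.colon (Ideal.span {x}) →
      a * c ∉ (Q.colon (Ideal.span {x})).radical →
      (b * c) ^ n ∈ Q.colon (Ideal.span {x}) := by
  constructor
  · intro htop
    have : (1 : R) ∈ Q.colon (Ideal.span {x}) := htop ▸ trivial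
    rw [Ideal.mem_colon_span_singleton, one_mul] at this
    exact hx this
  · intro a b c habc hab hac
    rw [Ideal.mem_colon_span_singleton] at habc hab ⊢
    have h1 : (a * x) * (b * x) * c ∈ Q := by
      have : (a * x) * (b * x) * c = a * b * c * x * x := by ring
      rw [this, mul_assoc, hidem]
      exact habc
    have h2 : (a * x) * (b * x) ∉ Q := by
      intro hmem
      apply hab
      have : (a * x) * (b * x) = a * b * x * x := by ring
      rw [this, mul_assoc, hidem] at hmem
      exact hmem
    have h3 : (a * x) * c ∉ Q.radical := by
      intro hmem
      apply hac
      rw [Ideal.mem_radical_iff] at hmem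
      obtain ⟨k, hk⟩ := hmem
      rcases Nat.eq_zero_or_pos k with hk0 | hk0
      · simp [hk0] at hk
        exact absurd (Q.eq_top_iff_one.mpr hk) hQ
      · rw [Ideal.mem_radical_iff]
        refine ⟨k, ?_⟩
        rw [Ideal.mem_colon_span_singleton]
        have : (a * x * c) ^ k = (a * c) ^ k * x ^ k := by ring
        rw [this, idem_pow hidem hk0] at hk
        exact hk
    have := h (a * x) (b * x) c h1 h2 h3
    have heq : (b * x * c) ^ n = (b * c) ^ n * x ^ n := by ring
    rw [heq, idem_pow hidem hn] at this
    exact this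
end

section
/- For a proper ideal I of R, the radical √I is a 2-absorbing ideal of R if and only if for every a,b,c ∈ R, abc ∈ I implies ab ∈ √I or ac ∈ √I or bc ∈ √I. -/
theorem stmt_9 {R : Type*} [CommRing R] (I : Ideal R) (hI : I ≠ ⊤) :
    (∀ x y z : R, x * y * z ∈ I.radical →
      x * y ∈ I.radical ∨ x * z ∈ I.radical ∨ y * z ∈ I.radical) ↔
    (∀ a b c : R, a * b * c ∈ I →
      a * b ∈ I.radical ∨ a * c ∈ I.radical ∨ b * c ∈ I.radical) := by
  constructor
  · intro h a b c habc
    exact h a b c (Ideal.le_radical habc)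
  · intro h x y z hxyz
    obtain ⟨n, hn⟩ := hxyz
    rw [show (x * y * z) ^ n = x ^ n * y ^ n * z ^ n by ring] at hn
    have key : ∀ u v : R, u ^ n * v ^ n ∈ I.radical → u * v ∈ I.radical := by
      intro u v huv
      have : (u * v) ^ n ∈ I.radical := by rwa [mul_pow]
      rw [← Ideal.radical_idem I]
      exact ⟨n, ‹(u * v) ^ n ∈ I.radical›⟩
    rcases h (x ^ n) (y ^ n) (z ^ n) hn with h1 | h1 | h1
    · exact Or.inl (key x y h1)
    · exact Or.inr (Or.inl (key x z h1))
    · exact Or.inr (Or.inr (key y z h1))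
end

section
/- If Q₁ and Q₂ are uniformly primary ideals of R with orders m₁ and m₂ respectively, then Q₁ ∩ Q₂ is a uniformly 2-absorbing primary ideal of R with order at most max{m₁, m₂}. -/
theorem stmt_10 {R : Type*} [CommRing R] (Q₁ Q₂ : Ideal R)
    (hQ₁ : Q₁ ≠ ⊤) (hQ₂ : Q₂ ≠ ⊤) (m₁ m₂ : ℕ) (hm₁ : 0 < m₁) (hm₂ : 0 < m₂)
    (h₁ : ∀ r s : R, r * s ∈ Q₁ → r ∉ Q₁ → s ^ m₁ ∈ Q₁)
    (h₂ : ∀ r s : R, r * s ∈ Q₂ → r ∉ Q₂ → s ^ m₂ ∈ Q₂) :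
    ∀ a b c : R, a * b * c ∈ Q₁ ⊓ Q₂ → a * b ∉ Q₁ ⊓ Q₂ →
      a * c ∉ (Q₁ ⊓ Q₂).radical → (b * c) ^ max m₁ m₂ ∈ Q₁ ⊓ Q₂ := by
  intro a b c habc hab hac
  rw [Ideal.mem_inf] at habc
  obtain ⟨hc1, hc2⟩ := habc
  have lift : ∀ (Q : Ideal R) (m : ℕ), m ≤ max m₁ m₂ → (b * c) ^ m ∈ Q →
      (b * c) ^ max m₁ m₂ ∈ Q := by
    intro Q m hm hx
    rw [← Nat.sub_add_cancel hm, pow_add]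
    exact Q.mul_mem_left _ hx
  have goal1 : (b * c) ^ m₁ ∈ Q₁ → (b * c) ^ m₂ ∈ Q₂ → (b * c) ^ max m₁ m₂ ∈ Q₁ ⊓ Q₂ := by
    intro g1 g2
    exact Ideal.mem_inf.mpr ⟨lift Q₁ m₁ (le_max_left _ _) g1, lift Q₂ m₂ (le_max_right _ _) g2⟩
  by_cases hab1 : a * b ∈ Q₁
  · by_cases hab2 : a * b ∈ Q₂
    · exact absurd (Ideal.mem_inf.mpr ⟨hab1, hab2⟩) hab
    · -- ab ∈ Q₁, ab ∉ Q₂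
      have hcm2 : c ^ m₂ ∈ Q₂ := h₂ _ _ hc2 hab2
      have g2 : (b * c) ^ m₂ ∈ Q₂ := by rw [mul_pow]; exact Q₂.mul_mem_left _ hcm2
      by_cases ha : a ∈ Q₁
      · exfalso
        apply hac
        refine ⟨m₂, Ideal.mem_inf.mpr ⟨?_, ?_⟩⟩
        · rw [mul_pow]
          exact Q₁.mul_mem_right _ (Ideal.pow_mem_of_mem _ ha _ hm₂)
        · rw [mul_pow]
          exact Q₂.mul_mem_left _ hcm2
      · have g1 : (b * c) ^ m₁ ∈ Q₁ := h₁ a (b * c) (by rw [← mul_assoc]; exact hc1) ha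
        exact goal1 g1 g2
  · -- ab ∉ Q₁
    have hcm1 : c ^ m₁ ∈ Q₁ := h₁ _ _ hc1 hab1
    have g1 : (b * c) ^ m₁ ∈ Q₁ := by rw [mul_pow]; exact Q₁.mul_mem_left _ hcm1
    by_cases hab2 : a * b ∈ Q₂
    · by_cases ha : a ∈ Q₂
      · exfalso
        apply hac
        refine ⟨m₁, Ideal.mem_inf.mpr ⟨?_, ?_⟩⟩
        · rw [mul_pow]
          exact Q₁.mul_mem_left _ hcm1
        · rw [mul_pow]
          exact Q₂.mul_mem_right _ (Ideal.pow_mem_of_mem _ ha _ hm₁)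
      · have g2 : (b * c) ^ m₂ ∈ Q₂ := h₂ a (b * c) (by rw [← mul_assoc]; exact hc2) ha
        exact goal1 g1 g2
    · have g2 : (b * c) ^ m₂ ∈ Q₂ := by
        rw [mul_pow]; exact Q₂.mul_mem_left _ (h₂ _ _ hc2 hab2)
      exact goal1 g1 g2
end

section
/- Let f : R → R' be a surjective ring homomorphism and Q a uniformly 2-absorbing primary ideal of R of order at most N containing ker(f). Then f(Q) is a uniformly 2-absorbing primary ideal of R' of order at most N. -/
theorem stmt_12 {R R' : Type*} [CommRing R] [CommRing R'] (f : R →+* R')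
    (hf : Function.Surjective f) (Q : Ideal R) (hQ : Q ≠ ⊤)
    (hker : RingHom.ker f ≤ Q) (N : ℕ) (hN : 0 < N)
    (h : ∀ a b c : R, a * b * c ∈ Q → a * b ∉ Q → a * c ∉ Q.radical →
      (b * c) ^ N ∈ Q) :
    Q.map f ≠ ⊤ ∧
    ∀ a b c : R', a * b * c ∈ Q.map f → a * b ∉ Q.map f →
      a * c ∉ (Q.map f).radical → (b * c) ^ N ∈ Q.map f := by
  have hcomap : (Q.map f).comap f = Q := by
    rw [Ideal.comap_map_of_surjective f hf Q]
    exact sup_eq_left.mpr (fun x hx => hker hx)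
  have hmem : ∀ x : R, f x ∈ Q.map f ↔ x ∈ Q := by
    intro x
    constructor
    · intro hx
      rw [← hcomap]; exact hx
    · intro hx; exact Ideal.mem_map_of_mem f hx
  constructor
  · intro htop
    apply hQ
    rw [← hcomap, htop, Ideal.comap_top]
  · intro a b c habc hab hac
    obtain ⟨a', rfl⟩ := hf a
    obtain ⟨b', rfl⟩ := hf b
    obtain ⟨c', rfl⟩ := hf c
    have h1 : a' * b' * c' ∈ Q := by
      rw [← hmem]; simpa using habc
    have h2 : a' * b' ∉ Q := by
      intro hh; exact hab (by simpa using (hmem _).mpr hh)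
    have h3 : a' * c' ∉ Q.radical := by
      intro ⟨n, hn⟩
      exact hac ⟨n, by simpa using (hmem _).mpr hn⟩
    have := h a' b' c' h1 h2 h3
    have := (hmem _).mpr this
    simpa using this
end

section
/- Let S be a multiplicatively closed subset of R and Q a uniformly 2-absorbing primary ideal of R of order at most N with Q ∩ S = ∅. Then S⁻¹Q is a uniformly 2-absorbing primary ideal of S⁻¹R of order at most N. -/
/-- The absorption condition of a uniformly 2-absorbing primary ideal of order at most `N`,
without the requirement that the ideal be proper. -/
def Ideal.TwoAbsorbingPrimaryOfOrder {R : Type*} [CommRing R] (Q : Ideal R) (N : ℕ) : Prop :=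
  ∀ a b c : R, a * b * c ∈ Q → a * b ∉ Q → a * c ∉ Q.radical → (b * c) ^ N ∈ Q

theorem Ideal.TwoAbsorbingPrimaryOfOrder.map_isLocalization {R : Type*} [CommRing R]
    (M : Submonoid R) (S : Type*) [CommRing S] [Algebra R S] [IsLocalization M S]
    {Q : Ideal R} {N : ℕ} (hQ : Q.TwoAbsorbingPrimaryOfOrder N) :
    (Q.map (algebraMap R S)).TwoAbsorbingPrimaryOfOrder N := by
  intro a b c habc hab hac
  obtain ⟨xa, sa, rfl⟩ := IsLocalization.exists_mk'_eq M a
  obtain ⟨xb, sb, rfl⟩ := IsLocalization.exists_mk'_eq M b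
  obtain ⟨xc, sc, rfl⟩ := IsLocalization.exists_mk'_eq M c
  simp only [← IsLocalization.mk'_mul, ← IsLocalization.mk'_pow, ← IsLocalization.map_radical M,
    IsLocalization.mk'_mem_map_algebraMap_iff M] at habc hab hac ⊢
  obtain ⟨u, hu, habc⟩ := habc
  -- the denominator witness `u` is absorbed into `a`
  have key : (xb * xc) ^ N ∈ Q :=
    hQ (u * xa) xb xc (by rwa [mul_assoc u, mul_assoc u])
      (fun hab' ↦ hab ⟨u, hu, by rwa [← mul_assoc]⟩)
      (fun hac' ↦ hac ⟨u, hu, by rwa [← mul_assoc]⟩)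
  exact ⟨1, M.one_mem, by rwa [one_mul]⟩

theorem stmt_13_general {R : Type*} [CommRing R] (S : Submonoid R) (Q : Ideal R)
    (hdisj : Disjoint (Q : Set R) (S : Set R))
    (N : ℕ)
    (h : ∀ a b c : R, a * b * c ∈ Q → a * b ∉ Q → a * c ∉ Q.radical →
      (b * c) ^ N ∈ Q) :
    Q.map (algebraMap R (Localization S)) ≠ ⊤ ∧
    ∀ a b c : Localization S,
      a * b * c ∈ Q.map (algebraMap R (Localization S)) →
      a * b ∉ Q.map (algebraMap R (Localization S)) →
      a * c ∉ (Q.map (algebraMap R (Localization S))).radical →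
      (b * c) ^ N ∈ Q.map (algebraMap R (Localization S)) :=
  ⟨(IsLocalization.map_algebraMap_ne_top_iff_disjoint S _ Q).2 hdisj.symm,
    Ideal.TwoAbsorbingPrimaryOfOrder.map_isLocalization S _ h⟩

theorem stmt_13 {R : Type*} [CommRing R] (S : Submonoid R) (Q : Ideal R)
    (hQ : Q ≠ ⊤) (hdisj : Disjoint (Q : Set R) (S : Set R))
    (N : ℕ) (hN : 0 < N)
    (h : ∀ a b c : R, a * b * c ∈ Q → a * b ∉ Q → a * c ∉ Q.radical →
      (b * c) ^ N ∈ Q) :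
    Q.map (algebraMap R (Localization S)) ≠ ⊤ ∧
    ∀ a b c : Localization S,
      a * b * c ∈ Q.map (algebraMap R (Localization S)) →
      a * b ∉ Q.map (algebraMap R (Localization S)) →
      a * c ∉ (Q.map (algebraMap R (Localization S))).radical →
      (b * c) ^ N ∈ Q.map (algebraMap R (Localization S)) :=
  stmt_13_general S Q hdisj N h
end

section
/- If Q is a 2-absorbing primary ideal of R and √Q is a finitely generated ideal, then Q is a uniformly 2-absorbing primary ideal of R. -/
theorem stmt_14 {R : Type*} [CommRing R] (Q : Ideal R) (hQ : Q ≠ ⊤)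
    (h2ap : ∀ a b c : R, a * b * c ∈ Q →
      a * b ∈ Q ∨ a * c ∈ Q.radical ∨ b * c ∈ Q.radical)
    (hfg : Q.radical.FG) :
    ∃ n : ℕ, 0 < n ∧ ∀ a b c : R, a * b * c ∈ Q → a * b ∉ Q →
      a * c ∉ Q.radical → (b * c) ^ n ∈ Q := by
  obtain ⟨m, hm⟩ := Ideal.exists_radical_pow_le_of_fg Q hfg
  refine ⟨m + 1, Nat.succ_pos m, fun a b c habc hab hac => ?_⟩
  rcases h2ap a b c habc with h | h | h
  · exact absurd h hab
  · exact absurd h hac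
  · have h1 : (b * c) ^ (m + 1) ∈ Q.radical ^ (m + 1) := Ideal.pow_mem_pow h _
    have h2 : Q.radical ^ (m + 1) ≤ Q := le_trans (Ideal.pow_le_pow_right (Nat.le_succ m)) hm
    exact h2 h1
end

section
/- A proper ideal Q of a product ring R = R₁ × R₂ is a uniformly 2-absorbing primary ideal of R if and only if either Q = Q₁ × R₂ for some uniformly 2-absorbing primary ideal Q₁ of R₁, or Q = R₁ × Q₂ for some uniformly 2-absorbing primary ideal Q₂ of R₂, or Q = Q₁ × Q₂ for some uniformly primary ideal Q₁ of R₁ and some uniformly primary ideal Q₂ of R₂. -/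
lemma pow_mem_of_pow_mem' {R : Type*} [CommRing R] {I : Ideal R} {x : R} {m n : ℕ}
    (h : x ^ m ∈ I) (hmn : m ≤ n) : x ^ n ∈ I := by
  have : x ^ n = x ^ (n - m) * x ^ m := by rw [← pow_add, Nat.sub_add_cancel hmn]
  rw [this]; exact I.mul_mem_left _ h

lemma radical_prod_eq' {R S : Type*} [CommRing R] [CommRing S] (I : Ideal R) (J : Ideal S) :
    (I.prod J).radical = I.radical.prod J.radical := by
  ext ⟨x, y⟩
  simp only [Ideal.mem_prod, Ideal.mem_radical_iff]
  constructor
  · rintro ⟨n, hn⟩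
    rw [Prod.pow_mk] at hn
    exact ⟨⟨n, hn.1⟩, ⟨n, hn.2⟩⟩
  · rintro ⟨⟨m, hm⟩, ⟨k, hk⟩⟩
    refine ⟨m + k, ?_⟩
    rw [Prod.pow_mk]
    exact ⟨pow_mem_of_pow_mem' hm (Nat.le_add_right _ _),
      pow_mem_of_pow_mem' hk (Nat.le_add_left _ _)⟩

lemma mem_prod'' {R S : Type*} [CommRing R] [CommRing S] {I : Ideal R} {J : Ideal S}
    {x : R × S} : x ∈ I.prod J ↔ x.1 ∈ I ∧ x.2 ∈ J := Iff.rfl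

lemma uprimary_rad {R : Type*} [CommRing R] {Q : Ideal R} {n : ℕ}
    (H : ∀ r s : R, r * s ∈ Q → r ∉ Q → s ^ n ∈ Q) {x : R} (m : ℕ) (hx : x ^ m ∈ Q) :
    x ^ n ∈ Q := by
  induction m with
  | zero =>
    simpa using Q.mul_mem_left (x ^ n) hx
  | succ m ih =>
    rw [pow_succ] at hx
    by_cases h : x ^ m ∈ Q
    · exact ih h
    · exact H _ _ hx h

theorem stmt_15 {R₁ R₂ : Type*} [CommRing R₁] [CommRing R₂] [Nontrivial R₁]
    [Nontrivial R₂] (Q : Ideal (R₁ × R₂)) (hQ : Q ≠ ⊤) :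
    (∃ n : ℕ, 0 < n ∧ ∀ a b c : R₁ × R₂, a * b * c ∈ Q → a * b ∉ Q →
      a * c ∉ Q.radical → (b * c) ^ n ∈ Q) ↔
    ((∃ Q₁ : Ideal R₁, Q₁ ≠ ⊤ ∧
        (∃ n : ℕ, 0 < n ∧ ∀ a b c : R₁, a * b * c ∈ Q₁ → a * b ∉ Q₁ →
          a * c ∉ Q₁.radical → (b * c) ^ n ∈ Q₁) ∧ Q = Q₁.prod ⊤) ∨
     (∃ Q₂ : Ideal R₂, Q₂ ≠ ⊤ ∧
        (∃ n : ℕ, 0 < n ∧ ∀ a b c : R₂, a * b * c ∈ Q₂ → a * b ∉ Q₂ →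
          a * c ∉ Q₂.radical → (b * c) ^ n ∈ Q₂) ∧ Q = (⊤ : Ideal R₁).prod Q₂) ∨
     (∃ (Q₁ : Ideal R₁) (Q₂ : Ideal R₂), Q₁ ≠ ⊤ ∧ Q₂ ≠ ⊤ ∧
        (∃ n : ℕ, 0 < n ∧ ∀ r s : R₁, r * s ∈ Q₁ → r ∉ Q₁ → s ^ n ∈ Q₁) ∧
        (∃ n : ℕ, 0 < n ∧ ∀ r s : R₂, r * s ∈ Q₂ → r ∉ Q₂ → s ^ n ∈ Q₂) ∧
        Q = Q₁.prod Q₂)) := by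
  constructor
  · rintro ⟨n, hn, H⟩
    set Q₁ := Q.map (RingHom.fst R₁ R₂) with hQ₁
    set Q₂ := Q.map (RingHom.snd R₁ R₂) with hQ₂
    have hQeq : Q = Q₁.prod Q₂ := Q.ideal_prod_eq
    have hnot : ¬ (Q₁ = ⊤ ∧ Q₂ = ⊤) := by
      rintro ⟨h1, h2⟩
      exact hQ (by rw [hQeq, h1, h2, Ideal.prod_top_top])
    by_cases h2 : Q₂ = ⊤
    · left
      have h1 : Q₁ ≠ ⊤ := fun h => hnot ⟨h, h2⟩
      refine ⟨Q₁, h1, ⟨n, hn, ?_⟩, by rw [hQeq, h2]⟩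
      intro a b c habc hab hac
      have key := H (a, 1) (b, 1) (c, 1) ?_ ?_ ?_
      · rw [hQeq] at key
        rw [Prod.mk_mul_mk, Prod.pow_mk] at key
        exact key.1
      · rw [hQeq, h2]; exact ⟨habc, trivial⟩
      · rw [hQeq, h2]
        intro hmem
        exact hab hmem.1
      · rw [hQeq, h2, radical_prod_eq']
        intro hmem
        exact hac hmem.1
    · by_cases h1 : Q₁ = ⊤
      · right; left
        refine ⟨Q₂, h2, ⟨n, hn, ?_⟩, by rw [hQeq, h1]⟩
        intro a b c habc hab hac
        have key := H (1, a) (1, b) (1, c) ?_ ?_ ?_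
        · rw [hQeq] at key
          rw [Prod.mk_mul_mk, Prod.pow_mk] at key
          exact key.2
        · rw [hQeq, h1]; exact ⟨trivial, habc⟩
        · rw [hQeq, h1]
          intro hmem
          exact hab hmem.2
        · rw [hQeq, h1, radical_prod_eq']
          intro hmem
          exact hac hmem.2
      · right; right
        refine ⟨Q₁, Q₂, h1, h2, ⟨n, hn, ?_⟩, ⟨n, hn, ?_⟩, hQeq⟩
        · intro r s hrs hr
          have key := H (r, 1) (1, 0) (s, 1) ?_ ?_ ?_
          · rw [hQeq] at key
            rw [Prod.mk_mul_mk, Prod.pow_mk] at key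
            simpa using key.1
          · rw [hQeq]
            exact ⟨by simpa using hrs, by simp⟩
          · rw [hQeq]
            intro hmem
            exact hr (by simpa using hmem.1)
          · rw [hQeq, radical_prod_eq']
            intro hmem
            have : (1 : R₂) ∈ Q₂.radical := by simpa using hmem.2
            exact h2 (Ideal.radical_eq_top.mp (Ideal.eq_top_iff_one _ |>.mpr this))
        · intro r s hrs hr
          have key := H (1, r) (0, 1) (1, s) ?_ ?_ ?_
          · rw [hQeq] at key
            rw [Prod.mk_mul_mk, Prod.pow_mk] at key
            simpa using key.2
          · rw [hQeq]
            exact ⟨by simp, by simpa using hrs⟩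
          · rw [hQeq]
            intro hmem
            exact hr (by simpa using hmem.2)
          · rw [hQeq, radical_prod_eq']
            intro hmem
            have : (1 : R₁) ∈ Q₁.radical := by simpa using hmem.1
            exact h1 (Ideal.radical_eq_top.mp (Ideal.eq_top_iff_one _ |>.mpr this))
  · rintro (⟨Q₁, h1, ⟨n, hn, H⟩, rfl⟩ | ⟨Q₂, h2, ⟨n, hn, H⟩, rfl⟩ |
      ⟨Q₁, Q₂, h1, h2, ⟨n₁, hn₁, H₁⟩, ⟨n₂, hn₂, H₂⟩, rfl⟩)
    · refine ⟨n, hn, ?_⟩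
      intro a b c habc hab hac
      rw [radical_prod_eq'] at hac
      rw [mem_prod''] at habc ⊢
      have h1' : a.1 * b.1 ∉ Q₁ := fun h => hab ⟨h, trivial⟩
      have h2' : a.1 * c.1 ∉ Q₁.radical := fun h => hac ⟨h, by
        rw [Ideal.radical_eq_top.mpr rfl]; trivial⟩
      refine ⟨?_, trivial⟩
      simpa using H a.1 b.1 c.1 habc.1 h1' h2'
    · refine ⟨n, hn, ?_⟩
      intro a b c habc hab hac
      rw [radical_prod_eq'] at hac
      rw [mem_prod''] at habc ⊢
      have h1' : a.2 * b.2 ∉ Q₂ := fun h => hab ⟨trivial, h⟩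
      have h2' : a.2 * c.2 ∉ Q₂.radical := fun h => hac ⟨by
        rw [Ideal.radical_eq_top.mpr rfl]; trivial, h⟩
      refine ⟨trivial, ?_⟩
      simpa using H a.2 b.2 c.2 habc.2 h1' h2'
    · refine ⟨max n₁ n₂, lt_max_of_lt_left hn₁, ?_⟩
      intro a b c habc hab hac
      rw [radical_prod_eq'] at hac
      rw [mem_prod''] at habc hab ⊢
      rw [mem_prod''] at hac
      simp only [Prod.fst_mul, Prod.snd_mul, Prod.pow_fst, Prod.pow_snd] at *
      by_cases hA : a.1 * b.1 ∈ Q₁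
      · -- Case B
        have hab2 : a.2 * b.2 ∉ Q₂ := fun h => hab ⟨hA, h⟩
        have hc2 : c.2 ^ n₂ ∈ Q₂ := H₂ _ _ habc.2 hab2
        have hc2r : c.2 ∈ Q₂.radical := ⟨n₂, hc2⟩
        have hac2 : a.2 * c.2 ∈ Q₂.radical := Ideal.mul_mem_left _ _ hc2r
        have hac1 : a.1 * c.1 ∉ Q₁.radical := fun h => hac ⟨h, hac2⟩
        have hac1' : a.1 * c.1 ∉ Q₁ := fun h => hac1 (Ideal.le_radical h)
        have hb1 : b.1 ^ n₁ ∈ Q₁ := by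
          refine H₁ (a.1 * c.1) b.1 ?_ hac1'
          rw [mul_right_comm]; exact habc.1
        constructor
        · rw [mul_pow]
          exact Ideal.mul_mem_right _ _ (pow_mem_of_pow_mem' hb1 (le_max_left _ _))
        · rw [mul_pow]
          exact Ideal.mul_mem_left _ _ (pow_mem_of_pow_mem' hc2 (le_max_right _ _))
      · -- Case A
        have hc1 : c.1 ^ n₁ ∈ Q₁ := H₁ _ _ habc.1 hA
        have comp1 : (b.1 * c.1) ^ max n₁ n₂ ∈ Q₁ := by
          rw [mul_pow]
          exact Ideal.mul_mem_left _ _ (pow_mem_of_pow_mem' hc1 (le_max_left _ _))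
        refine ⟨comp1, ?_⟩
        by_cases h : a.2 * c.2 ∈ Q₂.radical
        · exfalso
          have hac1 : a.1 * c.1 ∉ Q₁.radical := fun hh => hac ⟨hh, h⟩
          exact hac1 (Ideal.mul_mem_left _ _ ⟨n₁, hc1⟩)
        · have h' : a.2 * c.2 ∉ Q₂ := fun hh => h (Ideal.le_radical hh)
          have hb2 : b.2 ^ n₂ ∈ Q₂ := by
            refine H₂ (a.2 * c.2) b.2 ?_ h'
            rw [mul_right_comm]; exact habc.2
          rw [mul_pow]
          exact Ideal.mul_mem_right _ _ (pow_mem_of_pow_mem' hb2 (le_max_right _ _))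
end

section
/- A proper ideal Q of R is special 2-absorbing primary if and only if for every ideals I, J, K of R, IJK ⊆ Q implies IJ ⊆ √Q or IK ⊆ Q or JK ⊆ Q. -/
theorem stmt_16 {R : Type*} [CommRing R] (Q : Ideal R) (hQ : Q ≠ ⊤) :
    (∀ a b c : R, a * b * c ∈ Q → a * b ∉ Q → a * c ∉ Q.radical →
      b * c ∈ Q) ↔
    (∀ I J K : Ideal R, I * J * K ≤ Q →
      I * J ≤ Q.radical ∨ I * K ≤ Q ∨ J * K ≤ Q) := by
  constructor
  · intro hE I J K hIJK
    by_cases hIK : I * K ≤ Q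
    · exact Or.inr (Or.inl hIK)
    by_cases hJK : J * K ≤ Q
    · exact Or.inr (Or.inr hJK)
    left
    rw [Ideal.mul_le] at hIK hJK ⊢
    push_neg at hIK hJK
    obtain ⟨q₁, hq₁, k₁, hk₁, h1⟩ := hIK
    obtain ⟨q₂, hq₂, k₂, hk₂, h2⟩ := hJK
    have hmem : ∀ x ∈ I, ∀ z ∈ J, ∀ k ∈ K, x * k * z ∈ Q := by
      intro x hx z hz k hk
      have h := hIJK (Ideal.mul_mem_mul (Ideal.mul_mem_mul hx hz) hk)
      rwa [show x * z * k = x * k * z by ring] at h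
    have L : ∀ x ∈ I, ∀ z ∈ J, (¬ ∀ k ∈ K, x * k ∈ Q) → (¬ ∀ k ∈ K, z * k ∈ Q) →
        x * z ∈ Q.radical := by
      intro x hx z hz hPx hPz
      by_contra hxz
      have key : ∀ k ∈ K, x * k ∈ Q ∨ z * k ∈ Q := by
        intro k hk
        by_cases h : x * k ∈ Q
        · exact Or.inl h
        · right
          have h' := hE x k z (hmem x hx z hz k hk) h hxz
          rwa [mul_comm] at h'
      push_neg at hPx hPz
      obtain ⟨ka, hka, hxa⟩ := hPx
      obtain ⟨kb, hkb, hzb⟩ := hPz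
      have hza : z * ka ∈ Q := (key ka hka).resolve_left hxa
      have hxb : x * kb ∈ Q := (key kb hkb).resolve_right hzb
      rcases key (ka + kb) (K.add_mem hka hkb) with h | h
      · rw [mul_add] at h
        exact hxa (by simpa using Q.sub_mem h hxb)
      · rw [mul_add] at h
        exact hzb (by simpa using Q.sub_mem h hza)
    intro a ha b hb
    by_contra hab
    have hPq₁ : ¬ ∀ k ∈ K, q₁ * k ∈ Q := fun h => h1 (h k₁ hk₁)
    have hPq₂ : ¬ ∀ k ∈ K, q₂ * k ∈ Q := fun h => h2 (h k₂ hk₂)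
    by_cases hPa : ∀ k ∈ K, a * k ∈ Q <;> by_cases hPb : ∀ k ∈ K, b * k ∈ Q
    · -- a K ⊆ Q and b K ⊆ Q
      have haq : ¬ ∀ k ∈ K, (a + q₁) * k ∈ Q := by
        intro h
        refine hPq₁ fun k hk => ?_
        have := Q.sub_mem (h k hk) (hPa k hk)
        rwa [show (a + q₁) * k - a * k = q₁ * k by ring] at this
      have hbq : ¬ ∀ k ∈ K, (b + q₂) * k ∈ Q := by
        intro h
        refine hPq₂ fun k hk => ?_
        have := Q.sub_mem (h k hk) (hPb k hk)
        rwa [show (b + q₂) * k - b * k = q₂ * k by ring] at this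
      have h11 := L (a + q₁) (I.add_mem ha hq₁) (b + q₂) (J.add_mem hb hq₂) haq hbq
      have h12 := L (a + q₁) (I.add_mem ha hq₁) q₂ hq₂ haq hPq₂
      have h21 := L q₁ hq₁ (b + q₂) (J.add_mem hb hq₂) hPq₁ hbq
      have h22 := L q₁ hq₁ q₂ hq₂ hPq₁ hPq₂
      refine hab ?_
      have : a * b = (a + q₁) * (b + q₂) - (a + q₁) * q₂ - q₁ * (b + q₂) + q₁ * q₂ := by
        ring
      rw [this]
      exact add_mem (sub_mem (sub_mem h11 h12) h21) h22
    · -- a K ⊆ Q, b K ⊄ Q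
      have haq : ¬ ∀ k ∈ K, (a + q₁) * k ∈ Q := by
        intro h
        refine hPq₁ fun k hk => ?_
        have := Q.sub_mem (h k hk) (hPa k hk)
        rwa [show (a + q₁) * k - a * k = q₁ * k by ring] at this
      have h1' := L (a + q₁) (I.add_mem ha hq₁) b hb haq hPb
      have h2' := L q₁ hq₁ b hb hPq₁ hPb
      refine hab ?_
      have : a * b = (a + q₁) * b - q₁ * b := by ring
      rw [this]
      exact sub_mem h1' h2'
    · -- a K ⊄ Q, b K ⊆ Q
      have hbq : ¬ ∀ k ∈ K, (b + q₂) * k ∈ Q := by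
        intro h
        refine hPq₂ fun k hk => ?_
        have := Q.sub_mem (h k hk) (hPb k hk)
        rwa [show (b + q₂) * k - b * k = q₂ * k by ring] at this
      have h1' := L a ha (b + q₂) (J.add_mem hb hq₂) hPa hbq
      have h2' := L a ha q₂ hq₂ hPa hPq₂
      refine hab ?_
      have : a * b = a * (b + q₂) - a * q₂ := by ring
      rw [this]
      exact sub_mem h1' h2'
    · exact hab (L a ha b hb hPa hPb)
  · intro hI a b c habc hab hac
    have hmain : Ideal.span {a} * Ideal.span {c} * Ideal.span {b} ≤ Q := by
      rw [Ideal.span_singleton_mul_span_singleton, Ideal.span_singleton_mul_span_singleton,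
        Ideal.span_singleton_le_iff_mem]
      rwa [show a * c * b = a * b * c by ring]
    rcases hI _ _ _ hmain with h | h | h
    · rw [Ideal.span_singleton_mul_span_singleton, Ideal.span_singleton_le_iff_mem] at h
      exact absurd h hac
    · rw [Ideal.span_singleton_mul_span_singleton, Ideal.span_singleton_le_iff_mem] at h
      exact absurd h hab
    · rw [Ideal.span_singleton_mul_span_singleton, Ideal.span_singleton_le_iff_mem] at h
      rwa [mul_comm] at h
end

section
/- Let Q be a special 2-absorbing primary ideal of R and x ∈ R \ √Q. Then (Q : x) = (Q : x^n) for every n ≥ 2, and (√Q : x) = √(Q : x), and (Q : x) is a special 2-absorbing primary ideal of R. -/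
theorem stmt_17 {R : Type*} [CommRing R] (Q : Ideal R) (hQ : Q ≠ ⊤)
    (h : ∀ a b c : R, a * b * c ∈ Q → a * b ∉ Q → a * c ∉ Q.radical →
      b * c ∈ Q)
    (x : R) (hx : x ∉ Q.radical) :
    (∀ n : ℕ, 2 ≤ n →
      Q.colon (Ideal.span {x}) = Q.colon (Ideal.span {x ^ n})) ∧
    Q.radical.colon (Ideal.span {x}) = (Q.colon (Ideal.span {x})).radical ∧
    (Q.colon (Ideal.span {x}) ≠ ⊤ ∧
      ∀ a b c : R, a * b * c ∈ Q.colon (Ideal.span {x}) →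
        a * b ∉ Q.colon (Ideal.span {x}) →
        a * c ∉ (Q.colon (Ideal.span {x})).radical →
        b * c ∈ Q.colon (Ideal.span {x})) := by
  have hx2 : x * x ∉ Q.radical := by
    intro hc
    exact hx (by
      rcases hc with ⟨n, hn⟩
      exact ⟨2 * n, by rwa [pow_mul, pow_two]⟩)
  -- step: x*(x*r) ∈ Q → x*r ∈ Q
  have step : ∀ r : R, x * (x * r) ∈ Q → x * r ∈ Q := by
    intro r hr
    by_cases hxr : x * r ∈ Q
    · exact hxr
    · have := h x r x (by ring_nf; ring_nf at hr; exact hr) hxr hx2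
      rwa [mul_comm] at this
  -- key: for n ≥ 1, x^n * r ∈ Q → x * r ∈ Q
  have key : ∀ (n : ℕ), 1 ≤ n → ∀ r : R, x ^ n * r ∈ Q → x * r ∈ Q := by
    intro n hn
    induction n with
    | zero => omega
    | succ m ih =>
      intro r hr
      rcases Nat.eq_or_lt_of_le hn with h1 | h1
      · simpa [← h1] using hr
      · have hm : 1 ≤ m := by omega
        have : x ^ m * (x * r) ∈ Q := by
          have : x ^ (m + 1) * r = x ^ m * (x * r) := by ring
          rwa [this] at hr
        exact step r (ih hm (x * r) this)
  have keycolon : ∀ n : ℕ, 1 ≤ n →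
      Q.colon (Ideal.span {x}) = Q.colon (Ideal.span {x ^ n}) := by
    intro n hn
    ext r
    rw [Ideal.mem_colon_span_singleton, Ideal.mem_colon_span_singleton]
    constructor
    · intro hr
      have : r * x ^ n = (r * x) * x ^ (n - 1) := by
        rw [mul_assoc, ← pow_succ']
        congr 2
        omega
      rw [this]
      exact Q.mul_mem_right _ hr
    · intro hr
      have := key n hn r (by rwa [mul_comm] at hr)
      rwa [mul_comm] at this
  refine ⟨fun n hn => keycolon n (by omega), ?_, ?_, ?_⟩
  · ext r
    rw [Ideal.mem_colon_span_singleton, Ideal.mem_radical_iff]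
    constructor
    · intro hr
      rcases hr with ⟨n, hn⟩
      rcases Nat.eq_zero_or_pos n with h0 | h0
      · exact absurd (Q.eq_top_of_isUnit_mem (by simpa [h0] using hn) isUnit_one) hQ
      · refine ⟨n, ?_⟩
        rw [Ideal.mem_colon_span_singleton]
        have : x ^ n * r ^ n ∈ Q := by
          rw [← mul_pow, mul_comm]; exact hn
        have := key n h0 (r ^ n) this
        rwa [mul_comm] at this
    · rintro ⟨n, hn⟩
      rw [Ideal.mem_colon_span_singleton] at hn
      rcases Nat.eq_zero_or_pos n with h0 | h0
      · exact absurd (Ideal.le_radical (by simpa [h0] using hn : x ∈ Q)) hx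
      · refine ⟨n, ?_⟩
        have : (r * x) ^ n = (r ^ n * x) * x ^ (n - 1) := by
          rw [mul_pow, mul_assoc, ← pow_succ']
          congr 2
          omega
        rw [this]
        exact Q.mul_mem_right _ hn
  · intro hc
    have : (1 : R) ∈ Q.colon (Ideal.span {x}) := by rw [hc]; trivial
    rw [Ideal.mem_colon_span_singleton, one_mul] at this
    exact hx (Ideal.le_radical this)
  · intro a b c habc hab hac
    rw [Ideal.mem_colon_span_singleton] at habc ⊢
    have hab' : a * b ∉ Q := fun hq => hab (by
      rw [Ideal.mem_colon_span_singleton]; exact Q.mul_mem_right x hq)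
    have hac' : a * (c * x) ∉ Q.radical := by
      intro hq
      apply hac
      rw [Ideal.mem_radical_iff] at hq ⊢
      rcases hq with ⟨n, hn⟩
      rcases Nat.eq_zero_or_pos n with h0 | h0
      · exact absurd (Q.eq_top_of_isUnit_mem (by simpa [h0] using hn) isUnit_one) hQ
      · refine ⟨n, ?_⟩
        rw [Ideal.mem_colon_span_singleton]
        have : x ^ n * (a * c) ^ n ∈ Q := by
          have : (a * (c * x)) ^ n = x ^ n * (a * c) ^ n := by ring
          rwa [this] at hn
        have := key n h0 ((a * c) ^ n) this
        rwa [mul_comm] at this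
    have := h a b (c * x) (by rw [← mul_assoc]; exact habc) hab' hac'
    rwa [← mul_assoc] at this
end

section
/- An irreducible proper ideal Q of R is special 2-absorbing primary if and only if (Q : x) = (Q : x²) for every x ∈ R \ √Q. -/
theorem stmt_18 {R : Type*} [CommRing R] (Q : Ideal R) (hQ : Q ≠ ⊤)
    (hirr : ∀ I J : Ideal R, Q = I ⊓ J → Q = I ∨ Q = J) :
    (∀ a b c : R, a * b * c ∈ Q → a * b ∉ Q → a * c ∉ Q.radical →
      b * c ∈ Q) ↔
    (∀ x : R, x ∉ Q.radical →
      Q.colon (Ideal.span {x}) = Q.colon (Ideal.span {x ^ 2})) := by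
  constructor
  · intro h x hx
    ext r
    simp only [Ideal.mem_colon_span_singleton]
    constructor
    · intro hr
      have : r * x ^ 2 = r * x * x := by ring
      rw [this]
      exact Ideal.mul_mem_right _ _ hr
    · intro hr
      by_cases hxr : x * r ∈ Q
      · rw [mul_comm]; exact hxr
      · apply h x r x
        · have : x * r * x = r * x ^ 2 := by ring
          rw [this]; exact hr
        · exact hxr
        · intro hxx
          apply hx
          obtain ⟨n, hn⟩ := hxx
          exact ⟨2 * n, by rw [pow_mul]; simpa [pow_two] using hn⟩
  · intro h a b c habc hab hac
    have hc : c ∉ Q.radical := by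
      intro hc
      exact hac (Ideal.mul_mem_left _ a hc)
    have hcol := h c hc
    have key : Q = (Q ⊔ Ideal.span {b * c}) ⊓ Q.colon (Ideal.span {c}) := by
      apply le_antisymm
      · exact le_inf (le_sup_left) (fun t ht => by
          rw [Ideal.mem_colon_span_singleton]; exact Ideal.mul_mem_right _ _ ht)
      · rintro t ⟨ht1, ht2⟩
        simp only [SetLike.mem_coe] at ht1 ht2
        rw [Ideal.mem_colon_span_singleton] at ht2
        rw [Submodule.mem_sup] at ht1
        obtain ⟨q, hq, y, hy, rfl⟩ := ht1
        rw [Ideal.mem_span_singleton'] at hy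
        obtain ⟨r, rfl⟩ := hy
        have h1 : r * (b * c) * c ∈ Q := by
          have : r * (b * c) * c = (q + r * (b * c)) * c - q * c := by ring
          rw [this]
          exact Ideal.sub_mem _ ht2 (Ideal.mul_mem_right _ _ hq)
        have h2 : r * b ∈ Q.colon (Ideal.span {c ^ 2}) := by
          rw [Ideal.mem_colon_span_singleton]
          have : r * b * c ^ 2 = r * (b * c) * c := by ring
          rw [this]; exact h1
        rw [← hcol, Ideal.mem_colon_span_singleton] at h2
        have : r * (b * c) ∈ Q := by
          have e : r * (b * c) = r * b * c := by ring
          rw [e]; exact h2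
        exact Ideal.add_mem _ hq this
    rcases hirr _ _ key with h1 | h2
    · rw [h1]
      exact Ideal.mem_sup_right (Ideal.mem_span_singleton_self _)
    · exfalso
      apply hab
      rw [h2, Ideal.mem_colon_span_singleton]
      exact habc
end

section
/- Let Q be a special 2-absorbing primary ideal of R whose radical √Q = p is a divided prime ideal of R, i.e., p ⊂ xR for every x ∈ R \ p. Then Q is a p-primary ideal of R. -/
theorem stmt_19 {R : Type*} [CommRing R] (Q : Ideal R) (hQ : Q ≠ ⊤)
    (h : ∀ a b c : R, a * b * c ∈ Q → a * b ∉ Q → a * c ∉ Q.radical →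
      b * c ∈ Q)
    (hp : Q.radical.IsPrime)
    (hdiv : ∀ x : R, x ∉ Q.radical → Q.radical ≤ Ideal.span {x}) :
    Q.IsPrimary := by
  rw [Ideal.isPrimary_iff]
  refine ⟨hQ, fun {x y} hxy => ?_⟩
  by_cases hy : y ∈ Q.radical
  · exact Or.inr hy
  · left
    have hxr : x ∈ Q.radical := by
      rcases hp.mul_mem_iff_mem_or_mem.mp (Ideal.le_radical hxy) with hx | hy'
      · exact hx
      · exact absurd hy' hy
    obtain ⟨t, ht⟩ := Ideal.mem_span_singleton.mp (hdiv y hy hxr)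
    by_cases hyt : y * t ∈ Q
    · rwa [ht]
    · have h1 : y * t * y ∈ Q := by rw [← ht]; exact hxy
      have h2 : y * y ∉ Q.radical := fun hc =>
        hy ((hp.mul_mem_iff_mem_or_mem.mp hc).elim id id)
      have := h y t y h1 hyt h2
      rw [ht, mul_comm]; exact this
end
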